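/- arXiv:1912.00468 — 5 statements merged into one kernel-verified Lean document; each statement's English description precedes it below -/
import Mathlib

section
/- Let W be a symmetric positive semidefinite n×n matrix with nonnegative entries, p a nonnegative vector in ℝ^n, and c ≥ 0. Let N₀, N₁ ⊆ {1,…,n} be disjoint sets with N₀ ∪ N₁ ⊊ {1,…,n}, and assume χ_{N₁}ᵀ W χ_{N₁} ≤ c, where χ_S denotes the characteristic 0/1-vector of a set S. Let R = {1,…,n} \ (N₀ ∪ N₁), and define the matrix W̃ indexed by R via w̃_{ij} = w_{ij} for i ≠ j and w̃_{ii} = w_{ii} + 2·∑_{k∈N₁} w_{ik}, the vector p̃ as the restriction of p to R, and c̃ = c − χ_{N₁}ᵀ W χ_{N₁}. Then W̃ is positive semidefinite, and max{ pᵀx : xᵀWx ≤ c, x ∈ {0,1}ⁿ, x_i = 0 for all i ∈ N₀, x_i = 1 for all i ∈ N₁ } = pᵀχ_{N₁} + max{ p̃ᵀx̃ : x̃ᵀW̃x̃ ≤ c̃, x̃ ∈ {0,1}^R }. -/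
/-- The quadratic form `xᵀ W x`. -/
noncomputable def quadForm {ι : Type*} [Fintype ι] (W : Matrix ι ι ℝ) (x : ι → ℝ) : ℝ :=
  ∑ i, ∑ j, W i j * x i * x j

/-- The characteristic 0/1-vector of a set `S ⊆ {1,…,n}`. -/
noncomputable def charVec {n : ℕ} (S : Finset (Fin n)) : Fin n → ℝ :=
  fun i => if i ∈ S then 1 else 0

/-! Once the variables in `N₀ ∪ N₁` are fixed, a feasible `x` is `χ_{N₁} + y` with `y` a 0/1 vector
supported on `R`. For symmetric `W`, `xᵀWx = χᵀWχ + 2 χᵀWy + yᵀWy`, and the cross term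
`2 ∑_{i ∈ R} (∑_{k ∈ N₁} w_ik) y_i` equals `∑_{i ∈ R} (2 ∑_{k ∈ N₁} w_ik) y_i²` because `y_i² = y_i`:
it moves onto the diagonal of `W̃`. A nonnegative diagonal added to a principal submatrix keeps `W̃`
positive semidefinite, and the objective splits as `pᵀχ_{N₁} + p̃ᵀy`, so the two sets of attainable
values differ by the translation `pᵀχ_{N₁}`; they are bounded and, as `χ_{N₁}` is feasible, nonempty. -/

open Matrix Finset

section QuadForm

variable {ι : Type*} [Fintype ι]

lemma quadForm_eq_dotProduct_mulVec (W : Matrix ι ι ℝ) (x : ι → ℝ) :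
    quadForm W x = x ⬝ᵥ W *ᵥ x := by
  simp only [quadForm, dotProduct, mulVec, Finset.mul_sum]
  exact Finset.sum_congr rfl fun i _ => Finset.sum_congr rfl fun j _ => by ring

lemma quadForm_add_left (A B : Matrix ι ι ℝ) (x : ι → ℝ) :
    quadForm (A + B) x = quadForm A x + quadForm B x := by
  simp only [quadForm_eq_dotProduct_mulVec, add_mulVec, dotProduct_add]

lemma quadForm_add_of_isSymm {W : Matrix ι ι ℝ} (hW : W.IsSymm) (a b : ι → ℝ) :
    quadForm W (a + b) = quadForm W a + 2 * (a ⬝ᵥ W *ᵥ b) + quadForm W b := by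
  have hswap : b ⬝ᵥ W *ᵥ a = a ⬝ᵥ W *ᵥ b := by
    rw [dotProduct_mulVec, ← mulVec_transpose, hW.eq, dotProduct_comm]
  simp only [quadForm_eq_dotProduct_mulVec, mulVec_add, add_dotProduct, dotProduct_add, hswap]
  ring

lemma quadForm_diagonal_of_boolean [DecidableEq ι] (d : ι → ℝ) {x : ι → ℝ}
    (hx : ∀ i, x i = 0 ∨ x i = 1) : quadForm (diagonal d) x = d ⬝ᵥ x := by
  rw [quadForm_eq_dotProduct_mulVec]
  refine Finset.sum_congr rfl fun i _ => ?_
  rcases hx i with h | h <;> simp [mulVec_diagonal, h]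

lemma sum_eq_sum_subtype_of_eq_zero {M : Type*} [AddCommMonoid M] (R : Finset ι) {f : ι → M}
    (hf : ∀ i ∉ R, f i = 0) : ∑ i, f i = ∑ i : R, f i := by
  rw [Finset.sum_coe_sort R f]
  exact (Finset.sum_subset (Finset.subset_univ R) fun i _ hi => hf i hi).symm

lemma quadForm_eq_quadForm_submatrix_of_eq_zero (W : Matrix ι ι ℝ) (R : Finset ι) {x : ι → ℝ}
    (hx : ∀ i ∉ R, x i = 0) :
    quadForm W x = quadForm (W.submatrix (↑) (↑)) (fun i : R => x i) := by
  unfold quadForm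
  rw [sum_eq_sum_subtype_of_eq_zero R fun i hi => by simp [hx i hi]]
  refine Finset.sum_congr rfl fun i _ => ?_
  exact sum_eq_sum_subtype_of_eq_zero R fun j hj => by simp [hx j hj]

def packingValues (W : Matrix ι ι ℝ) (p : ι → ℝ) (c : ℝ) : Set ℝ :=
  {v | ∃ x : ι → ℝ, (∀ i, x i = 0 ∨ x i = 1) ∧ quadForm W x ≤ c ∧ v = ∑ i, p i * x i}

lemma packingValues_nonempty (W : Matrix ι ι ℝ) (p : ι → ℝ) {c : ℝ} (hc : 0 ≤ c) :
    (packingValues W p c).Nonempty :=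
  ⟨0, 0, fun _ => Or.inl rfl, by simpa [quadForm] using hc, by simp⟩

lemma bddAbove_packingValues (W : Matrix ι ι ℝ) (p : ι → ℝ) (c : ℝ) :
    BddAbove (packingValues W p c) := by
  refine ⟨∑ i, |p i|, ?_⟩
  rintro v ⟨x, hx, -, rfl⟩
  refine Finset.sum_le_sum fun i _ => ?_
  rcases hx i with h | h <;> simp [h, le_abs_self]

end QuadForm

section Reduction

variable {ι : Type*} [DecidableEq ι]

def reducedMatrix (W : Matrix ι ι ℝ) (N₁ R : Finset ι) : Matrix R R ℝ :=
  W.submatrix (↑) (↑) + diagonal fun i : R => 2 * ∑ k ∈ N₁, W i k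

lemma reducedMatrix_apply (W : Matrix ι ι ℝ) (N₁ R : Finset ι) (i j : R) :
    reducedMatrix W N₁ R i j = if i = j then W i i + 2 * ∑ k ∈ N₁, W i k else W i j := by
  by_cases h : i = j
  · subst h; simp [reducedMatrix]
  · simp [reducedMatrix, h]

lemma posSemidef_reducedMatrix {W : Matrix ι ι ℝ} (hW : W.PosSemidef) (hW₀ : ∀ i j, 0 ≤ W i j)
    (N₁ R : Finset ι) : (reducedMatrix W N₁ R).PosSemidef :=
  (hW.submatrix _).add <| PosSemidef.diagonal fun i =>
    mul_nonneg zero_le_two (Finset.sum_nonneg fun k _ => hW₀ i k)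

end Reduction

section FixedVariables

lemma mulVec_charVec {n : ℕ} (W : Matrix (Fin n) (Fin n) ℝ) (S : Finset (Fin n)) (i : Fin n) :
    (W *ᵥ charVec S) i = ∑ k ∈ S, W i k := by
  simp [mulVec, dotProduct, charVec]

variable {n : ℕ} {N₁ R : Finset (Fin n)} {x : Fin n → ℝ}

lemma sum_mul_eq_sum_add_sum_subtype (p : Fin n → ℝ) (hN₁R : Disjoint N₁ R)
    (hx₁ : ∀ i ∈ N₁, x i = 1) (hsupp : ∀ i ∉ N₁, i ∉ R → x i = 0) :
    ∑ i, p i * x i = ∑ i ∈ N₁, p i + ∑ i : R, p i * x i := by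
  have hzero : ∀ i ∉ N₁ ∪ R, p i * x i = 0 := fun i hi => by
    rw [Finset.mem_union, not_or] at hi
    simp [hsupp i hi.1 hi.2]
  rw [← Finset.sum_subset (Finset.subset_univ _) fun i _ hi => hzero i hi,
    Finset.sum_union hN₁R, ← Finset.sum_coe_sort R]
  congr 1
  exact Finset.sum_congr rfl fun i hi => by simp [hx₁ i hi]

lemma quadForm_eq_quadForm_charVec_add_reducedMatrix {W : Matrix (Fin n) (Fin n) ℝ}
    (hW : W.IsSymm) (hN₁R : Disjoint N₁ R) (hx : ∀ i, x i = 0 ∨ x i = 1)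
    (hx₁ : ∀ i ∈ N₁, x i = 1) (hsupp : ∀ i ∉ N₁, i ∉ R → x i = 0) :
    quadForm W x =
      quadForm W (charVec N₁) + quadForm (reducedMatrix W N₁ R) (fun i : R => x i) := by
  set y := x - charVec N₁
  have hy : ∀ i ∉ R, y i = 0 := fun i hi => by
    by_cases hi₁ : i ∈ N₁
    · simp [y, charVec, hi₁, hx₁ i hi₁]
    · simp [y, charVec, hi₁, hsupp i hi₁ hi]
  have hyR : (fun i : R => y i) = fun i : R => x i := funext fun i => by
    simp [y, charVec, Finset.disjoint_right.mp hN₁R i.2]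
  have hcross : charVec N₁ ⬝ᵥ W *ᵥ y = ∑ i : R, (∑ k ∈ N₁, W i k) * x i := by
    rw [dotProduct_mulVec, ← mulVec_transpose, hW.eq, dotProduct_comm, dotProduct,
      sum_eq_sum_subtype_of_eq_zero R fun i hi => by simp [hy i hi]]
    refine Finset.sum_congr rfl fun i _ => ?_
    rw [mulVec_charVec, ← congrFun hyR i, mul_comm]
  calc quadForm W x = quadForm W (charVec N₁ + y) := by simp [y]
    _ = quadForm W (charVec N₁) + 2 * (charVec N₁ ⬝ᵥ W *ᵥ y)
          + quadForm (W.submatrix (↑) (↑)) (fun i : R => x i) := by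
      rw [quadForm_add_of_isSymm hW, quadForm_eq_quadForm_submatrix_of_eq_zero W R hy, hyR]
    _ = quadForm W (charVec N₁) + quadForm (reducedMatrix W N₁ R) (fun i : R => x i) := by
      rw [reducedMatrix, quadForm_add_left, quadForm_diagonal_of_boolean _ fun i : R => hx i,
        hcross, dotProduct, Finset.mul_sum]
      simp only [mul_assoc]
      ring

variable {N₀ : Finset (Fin n)}

lemma eq_zero_of_notMem_of_notMem (hR : R = univ \ (N₀ ∪ N₁)) (hx₀ : ∀ i ∈ N₀, x i = 0)
    {i : Fin n} (hi₁ : i ∉ N₁) (hiR : i ∉ R) : x i = 0 :=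
  hx₀ i <| by simpa [hR, hi₁] using hiR

lemma exists_extension_of_boolean (hdisj : Disjoint N₀ N₁) (hR : R = univ \ (N₀ ∪ N₁))
    {y : R → ℝ} (hy : ∀ i, y i = 0 ∨ y i = 1) :
    ∃ x : Fin n → ℝ, (∀ i, x i = 0 ∨ x i = 1) ∧ (∀ i ∈ N₀, x i = 0) ∧ (∀ i ∈ N₁, x i = 1) ∧
      (fun i : R => x i) = y := by
  have hN₁R : ∀ i ∈ N₁, i ∉ R := fun i hi => by simp [hR, hi]
  refine ⟨fun i => if h : i ∈ R then y ⟨i, h⟩ else charVec N₁ i, fun i => ?_, fun i hi => ?_,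
    fun i hi => by simp [hN₁R i hi, charVec, hi], funext fun i => by simp⟩
  · by_cases h : i ∈ R
    · simpa [h] using hy ⟨i, h⟩
    · by_cases hi : i ∈ N₁ <;> simp [h, charVec, hi]
  · have hiR : i ∉ R := by simp [hR, hi]
    simp [hiR, charVec, Finset.disjoint_left.mp hdisj hi]

lemma fixedPackingValues_eq_image {W : Matrix (Fin n) (Fin n) ℝ} (hW : W.IsSymm) (p : Fin n → ℝ)
    (c : ℝ) (hdisj : Disjoint N₀ N₁) (hR : R = univ \ (N₀ ∪ N₁)) :
    {v : ℝ | ∃ x : Fin n → ℝ, (∀ i, x i = 0 ∨ x i = 1) ∧ quadForm W x ≤ c ∧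
        (∀ i ∈ N₀, x i = 0) ∧ (∀ i ∈ N₁, x i = 1) ∧ v = ∑ i, p i * x i} =
      (∑ i ∈ N₁, p i + ·) '' packingValues (reducedMatrix W N₁ R) (fun i : R => p i)
        (c - quadForm W (charVec N₁)) := by
  have hN₁R : Disjoint N₁ R := by
    rw [hR]
    exact Finset.disjoint_sdiff.mono_left Finset.subset_union_right
  ext v
  constructor
  · rintro ⟨x, hx, hq, hx₀, hx₁, rfl⟩
    have hsupp := fun i => eq_zero_of_notMem_of_notMem (i := i) hR hx₀
    refine ⟨_, ⟨fun i : R => x i, fun i => hx i, ?_, rfl⟩,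
      (sum_mul_eq_sum_add_sum_subtype p hN₁R hx₁ hsupp).symm⟩
    rw [quadForm_eq_quadForm_charVec_add_reducedMatrix hW hN₁R hx hx₁ hsupp] at hq
    linarith
  · rintro ⟨_, ⟨y, hy, hq, rfl⟩, rfl⟩
    obtain ⟨x, hx, hx₀, hx₁, rfl⟩ := exists_extension_of_boolean hdisj hR hy
    have hsupp := fun i => eq_zero_of_notMem_of_notMem (i := i) hR hx₀
    refine ⟨x, hx, ?_, hx₀, hx₁, (sum_mul_eq_sum_add_sum_subtype p hN₁R hx₁ hsupp).symm⟩
    rw [quadForm_eq_quadForm_charVec_add_reducedMatrix hW hN₁R hx hx₁ hsupp]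
    linarith

end FixedVariables

theorem stmt_0_general {n : ℕ} (W : Matrix (Fin n) (Fin n) ℝ)
    (hpsd : W.PosSemidef) (hW : ∀ i j, 0 ≤ W i j)
    (p : Fin n → ℝ) (c : ℝ)
    (N₀ N₁ : Finset (Fin n)) (hdisj : Disjoint N₀ N₁)
    (hfeas : quadForm W (charVec N₁) ≤ c)
    (R : Finset (Fin n)) (hR : R = Finset.univ \ (N₀ ∪ N₁))
    (tW : Matrix ↥R ↥R ℝ)
    (htW : ∀ i j : ↥R,
      tW i j = if i = j then W i.1 i.1 + 2 * ∑ k ∈ N₁, W i.1 k else W i.1 j.1)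
    (tp : ↥R → ℝ) (htp : ∀ i : ↥R, tp i = p i.1)
    (tc : ℝ) (htc : tc = c - quadForm W (charVec N₁)) :
    tW.PosSemidef ∧
    sSup {v : ℝ | ∃ x : Fin n → ℝ, (∀ i, x i = 0 ∨ x i = 1) ∧ quadForm W x ≤ c ∧
        (∀ i ∈ N₀, x i = 0) ∧ (∀ i ∈ N₁, x i = 1) ∧ v = ∑ i, p i * x i} =
      (∑ i ∈ N₁, p i) +
        sSup {v : ℝ | ∃ x : ↥R → ℝ, (∀ i, x i = 0 ∨ x i = 1) ∧ quadForm tW x ≤ tc ∧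
          v = ∑ i, tp i * x i} := by
  have hsymm : W.IsSymm := by
    simpa [IsHermitian, IsSymm, conjTranspose_eq_transpose_of_trivial] using hpsd.isHermitian
  obtain rfl : tW = reducedMatrix W N₁ R := Matrix.ext fun i j => by rw [htW, reducedMatrix_apply]
  obtain rfl : tp = fun i : R => p i := funext htp
  subst htc
  refine ⟨posSemidef_reducedMatrix hpsd hW N₁ R, ?_⟩
  rw [fixedPackingValues_eq_image hsymm p c hdisj hR]
  exact ((OrderIso.addLeft _).map_csSup' (packingValues_nonempty _ _ (sub_nonneg.mpr hfeas))
    (bddAbove_packingValues _ _ _)).symm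

theorem stmt_0 {n : ℕ} (W : Matrix (Fin n) (Fin n) ℝ)
    (hpsd : W.PosSemidef) (hW : ∀ i j, 0 ≤ W i j)
    (p : Fin n → ℝ) (hp : ∀ i, 0 ≤ p i) (c : ℝ) (hc : 0 ≤ c)
    (N₀ N₁ : Finset (Fin n)) (hdisj : Disjoint N₀ N₁)
    (hproper : N₀ ∪ N₁ ⊂ Finset.univ)
    (hfeas : quadForm W (charVec N₁) ≤ c)
    (R : Finset (Fin n)) (hR : R = Finset.univ \ (N₀ ∪ N₁))
    (tW : Matrix ↥R ↥R ℝ)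
    (htW : ∀ i j : ↥R,
      tW i j = if i = j then W i.1 i.1 + 2 * ∑ k ∈ N₁, W i.1 k else W i.1 j.1)
    (tp : ↥R → ℝ) (htp : ∀ i : ↥R, tp i = p i.1)
    (tc : ℝ) (htc : tc = c - quadForm W (charVec N₁)) :
    tW.PosSemidef ∧
    sSup {v : ℝ | ∃ x : Fin n → ℝ, (∀ i, x i = 0 ∨ x i = 1) ∧ quadForm W x ≤ c ∧
        (∀ i ∈ N₀, x i = 0) ∧ (∀ i ∈ N₁, x i = 1) ∧ v = ∑ i, p i * x i} =
      (∑ i ∈ N₁, p i) +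
        sSup {v : ℝ | ∃ x : ↥R → ℝ, (∀ i, x i = 0 ∨ x i = 1) ∧ quadForm tW x ≤ tc ∧
          v = ∑ i, tp i * x i} :=
  stmt_0_general W hpsd hW p c N₀ N₁ hdisj hfeas R hR tW htW tp htp tc htc
end

section
/- Let W be a symmetric n×n matrix with nonnegative diagonal d, D = diag(d), c ≥ 0, and let φ = (√5 − 1)/2. If y ∈ [0,1]ⁿ satisfies yᵀWy ≤ c and dᵀy ≤ c, then the scaled vector φ·y satisfies (φy)ᵀ(W−D)(φy) + dᵀ(φy) ≤ c. -/
/-!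
Scaling `y` by `φ` scales the off-diagonal quadratic form by `φ²` and the linear term by `φ`.
Removing the diagonal only decreases the quadratic form (the diagonal is nonnegative), so the
left-hand side is at most `φ² yᵀWy + φ dᵀy ≤ (φ² + φ) c = c`.
-/

open Finset Matrix

section QuadForm

variable {ι : Type*} [Fintype ι]

lemma quadForm_sub (A B : Matrix ι ι ℝ) (x : ι → ℝ) :
    quadForm (A - B) x = quadForm A x - quadForm B x := by
  simp only [quadForm, Matrix.sub_apply, sub_mul, sum_sub_distrib]

lemma quadForm_diagonal [DecidableEq ι] (d x : ι → ℝ) :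
    quadForm (diagonal d) x = ∑ i, d i * x i ^ 2 := by
  simp [quadForm, diagonal_apply, ite_mul, sq, mul_assoc]

lemma quadForm_const_mul (W : Matrix ι ι ℝ) (a : ℝ) (x : ι → ℝ) :
    quadForm W (fun i => a * x i) = a ^ 2 * quadForm W x := by
  simp only [quadForm, mul_sum]
  exact sum_congr rfl fun i _ => sum_congr rfl fun j _ => by ring

lemma quadForm_sub_diagonal_const_mul_add_le [DecidableEq ι] (W : Matrix ι ι ℝ)
    (hd : ∀ i, 0 ≤ W i i) {a c : ℝ} (ha : 0 ≤ a) (ha_sq : a ^ 2 + a = 1) {y : ι → ℝ}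
    (h1 : quadForm W y ≤ c) (h2 : ∑ i, W i i * y i ≤ c) :
    quadForm (W - diagonal (fun i => W i i)) (fun i => a * y i) +
      ∑ i, W i i * (a * y i) ≤ c := by
  have hdiag : 0 ≤ ∑ i, W i i * y i ^ 2 :=
    sum_nonneg fun i _ => mul_nonneg (hd i) (sq_nonneg _)
  have hlin : ∑ i, W i i * (a * y i) = a * ∑ i, W i i * y i := by
    rw [mul_sum]
    exact sum_congr rfl fun i _ => by ring
  rw [quadForm_const_mul, quadForm_sub, quadForm_diagonal, hlin]
  calc a ^ 2 * (quadForm W y - ∑ i, W i i * y i ^ 2) + a * ∑ i, W i i * y i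
      ≤ a ^ 2 * quadForm W y + a * ∑ i, W i i * y i := by nlinarith [sq_nonneg a]
    _ ≤ a ^ 2 * c + a * c := by gcongr
    _ = c := by rw [← add_mul, ha_sq, one_mul]

end QuadForm

lemma neg_goldenConj_sq_add_self : (-Real.goldenConj) ^ 2 + -Real.goldenConj = 1 := by
  linarith [Real.goldenConj_sq, neg_sq Real.goldenConj]

theorem stmt_2_general {n : ℕ} (W : Matrix (Fin n) (Fin n) ℝ)
    (hd : ∀ i, 0 ≤ W i i) (c : ℝ)
    (φ : ℝ) (hφ : φ = (Real.sqrt 5 - 1) / 2)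
    (y : Fin n → ℝ)
    (h1 : quadForm W y ≤ c) (h2 : (∑ i, W i i * y i) ≤ c) :
    quadForm (W - Matrix.diagonal (fun i => W i i)) (fun i => φ * y i) +
      (∑ i, W i i * (φ * y i)) ≤ c := by
  have hφψ : φ = -Real.goldenConj := by rw [hφ, Real.goldenConj]; ring
  subst hφψ
  exact quadForm_sub_diagonal_const_mul_add_le W hd (neg_nonneg.2 Real.goldenConj_neg.le)
    neg_goldenConj_sq_add_self h1 h2

theorem stmt_2 {n : ℕ} (W : Matrix (Fin n) (Fin n) ℝ) (hsym : W.IsSymm)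
    (hd : ∀ i, 0 ≤ W i i) (c : ℝ) (hc : 0 ≤ c)
    (φ : ℝ) (hφ : φ = (Real.sqrt 5 - 1) / 2)
    (y : Fin n → ℝ) (hy : ∀ i, y i ∈ Set.Icc (0:ℝ) 1)
    (h1 : quadForm W y ≤ c) (h2 : (∑ i, W i i * y i) ≤ c) :
    quadForm (W - Matrix.diagonal (fun i => W i i)) (fun i => φ * y i) +
      (∑ i, W i i * (φ * y i)) ≤ c :=
  stmt_2_general W hd c φ hφ y h1 h2
end

section
/- Let W be a symmetric n×n matrix with nonnegative entries and strictly positive diagonal d, p a nonnegative vector in ℝ^n, c ≥ 0, and φ = (√5 − 1)/2. For every y ∈ [0,1]ⁿ with yᵀWy ≤ c and dᵀy ≤ c there exists x ∈ {0,1}ⁿ with xᵀWx ≤ c and pᵀx ≥ φ·pᵀy − max_{i∈[n]} p_i. -/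
open Finset Function Matrix

section

variable {ι : Type*} [Fintype ι]

lemma quadForm_smul (W : Matrix ι ι ℝ) (t : ℝ) (y : ι → ℝ) :
    quadForm W (t • y) = t ^ 2 * quadForm W y := by
  simp only [quadForm, Pi.smul_apply, smul_eq_mul, mul_sum]
  exact sum_congr rfl fun i _ => sum_congr rfl fun j _ => by ring

noncomputable def fractional (z : ι → ℝ) : Finset ι :=
  univ.filter fun k => 0 < z k ∧ z k < 1

lemma mem_fractional {z : ι → ℝ} {k : ι} : k ∈ fractional z ↔ 0 < z k ∧ z k < 1 := by
  simp [fractional]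

lemma eq_zero_or_eq_one_of_notMem_fractional {z : ι → ℝ} (hz : z ∈ Set.Icc 0 1) {k : ι}
    (hk : k ∉ fractional z) : z k = 0 ∨ z k = 1 := by
  rw [mem_fractional, not_and_or, not_lt, not_lt] at hk
  rcases hk with hk | hk
  · exact Or.inl (le_antisymm hk (hz.1 k))
  · exact Or.inr (le_antisymm (hz.2 k) hk)

lemma card_fractional_lt {z z' : ι → ℝ} (h : ∀ k ∉ fractional z, z' k = z k) {i : ι}
    (hi : i ∈ fractional z) (hi' : i ∉ fractional z') :
    #(fractional z') < #(fractional z) := by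
  have hsub : fractional z' ⊆ fractional z := fun k hk => by
    by_contra hkz
    rw [mem_fractional, h k hkz, ← mem_fractional] at hk
    exact hkz hk
  exact card_lt_card ((Finset.ssubset_iff_of_subset hsub).2 ⟨i, hi, hi'⟩)

end

section

variable {ι : Type*} [DecidableEq ι]

lemma single_sub_single_mul_nonpos {i j : ι} {a b : ℝ} (ha : 0 ≤ a) (hb : 0 ≤ b) {k l : ι}
    (hkl : k ≠ l) :
    (Pi.single i a - Pi.single j b : ι → ℝ) k * (Pi.single i a - Pi.single j b : ι → ℝ) l ≤ 0 := by
  simp only [Pi.sub_apply, Pi.single_apply]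
  split_ifs <;> subst_vars <;> first | exact absurd rfl hkl | nlinarith

lemma update_zero_mem_Icc {z : ι → ℝ} (hz : z ∈ Set.Icc 0 1) (i : ι) :
    update z i 0 ∈ Set.Icc 0 1 := by
  constructor <;> intro k <;> rcases eq_or_ne k i with rfl | hk
  · simp
  · rw [update_of_ne hk]; exact hz.1 k
  · simp
  · rw [update_of_ne hk]; exact hz.2 k

end

section

variable {ι : Type*} [Fintype ι] [DecidableEq ι] {W : Matrix ι ι ℝ}

/-- The expected value of `xᵀ W x` when the coordinates `x i` are independent Bernoulli
variables with means `z i`. -/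
noncomputable def multilinearQuadForm (W : Matrix ι ι ℝ) (z : ι → ℝ) : ℝ :=
  ∑ k, ∑ l, W k l * z k * if k = l then 1 else z l

lemma multilinearQuadForm_eq_quadForm_add (z : ι → ℝ) :
    multilinearQuadForm W z = quadForm W z + ∑ k, W k k * z k * (1 - z k) := by
  have hdiag : ∑ k, W k k * z k * (1 - z k) =
      ∑ k, ∑ l, if k = l then W k l * z k * (1 - z l) else 0 := by
    simp
  rw [hdiag, quadForm, ← sum_add_distrib]
  refine sum_congr rfl fun k _ => ?_
  rw [← sum_add_distrib]
  refine sum_congr rfl fun l _ => ?_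
  split_ifs <;> ring

lemma multilinearQuadForm_eq_quadForm {x : ι → ℝ} (hx : ∀ k, x k = 0 ∨ x k = 1) :
    multilinearQuadForm W x = quadForm W x := by
  rw [multilinearQuadForm_eq_quadForm_add, add_eq_left]
  refine sum_eq_zero fun k _ => ?_
  rcases hx k with h | h <;> simp [h]

lemma multilinearQuadForm_le_quadForm_add (hW : ∀ k l, 0 ≤ W k l) {z : ι → ℝ} (hz : 0 ≤ z) :
    multilinearQuadForm W z ≤ quadForm W z + ∑ k, W k k * z k := by
  rw [multilinearQuadForm_eq_quadForm_add]
  refine add_le_add le_rfl (sum_le_sum fun k _ => ?_)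
  nlinarith [mul_nonneg (mul_nonneg (hW k k) (hz k)) (hz k)]

lemma multilinearQuadForm_smul_le (hW : ∀ k l, 0 ≤ W k l) {t : ℝ} (ht : 0 ≤ t) {y : ι → ℝ}
    (hy : 0 ≤ y) :
    multilinearQuadForm W (t • y) ≤ t ^ 2 * quadForm W y + t * ∑ k, W k k * y k := by
  refine (multilinearQuadForm_le_quadForm_add hW (smul_nonneg ht hy)).trans_eq ?_
  simp only [quadForm_smul, Pi.smul_apply, smul_eq_mul, mul_sum]
  exact congrArg _ (sum_congr rfl fun k _ => by ring)

lemma multilinearQuadForm_mono (hW : ∀ k l, 0 ≤ W k l) {x z : ι → ℝ} (hx : 0 ≤ x)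
    (hxz : x ≤ z) : multilinearQuadForm W x ≤ multilinearQuadForm W z := by
  have hz : 0 ≤ z := hx.trans hxz
  refine sum_le_sum fun k _ => sum_le_sum fun l _ => ?_
  have := hW k l
  split_ifs
  · gcongr; exact hxz k
  · exact mul_le_mul (mul_le_mul_of_nonneg_left (hxz k) this) (hxz l) (hx l)
      (mul_nonneg this (hz k))

lemma exists_multilinearQuadForm_add_smul (hW : ∀ k l, 0 ≤ W k l) {v : ι → ℝ}
    (hv : ∀ k l, k ≠ l → v k * v l ≤ 0) (z : ι → ℝ) :
    ∃ L Q : ℝ, Q ≤ 0 ∧ ∀ s : ℝ,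
      multilinearQuadForm W (z + s • v) = multilinearQuadForm W z + L * s + Q * s ^ 2 := by
  refine ⟨∑ k, ∑ l, W k l * (v k * (if k = l then 1 else z l) + z k * if k = l then 0 else v l),
    ∑ k, ∑ l, W k l * v k * (if k = l then 0 else v l), ?_, fun s => ?_⟩
  · refine sum_nonpos fun k _ => sum_nonpos fun l _ => ?_
    split_ifs with hkl
    · simp
    · rw [mul_assoc]; exact mul_nonpos_of_nonneg_of_nonpos (hW k l) (hv k l hkl)
  · simp only [multilinearQuadForm, sum_mul, ← sum_add_distrib]
    refine sum_congr rfl fun k _ => sum_congr rfl fun l _ => ?_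
    simp only [Pi.add_apply, Pi.smul_apply, smul_eq_mul]
    split_ifs <;> ring

lemma multilinearQuadForm_add_smul_le_or_sub_smul_le (hW : ∀ k l, 0 ≤ W k l) {v : ι → ℝ}
    (hv : ∀ k l, k ≠ l → v k * v l ≤ 0) (z : ι → ℝ) {s t : ℝ} (hs : 0 ≤ s) (ht : 0 ≤ t) :
    multilinearQuadForm W (z + s • v) ≤ multilinearQuadForm W z ∨
      multilinearQuadForm W (z - t • v) ≤ multilinearQuadForm W z := by
  obtain ⟨L, Q, hQ, hline⟩ := exists_multilinearQuadForm_add_smul hW hv z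
  rw [sub_eq_add_neg, ← neg_smul, hline, hline]
  rcases le_total L 0 with hL | hL
  · left
    nlinarith [mul_nonpos_of_nonpos_of_nonneg hL hs,
      mul_nonpos_of_nonpos_of_nonneg hQ (sq_nonneg s)]
  · right
    nlinarith [mul_nonneg hL ht, mul_nonpos_of_nonpos_of_nonneg hQ (sq_nonneg t)]

lemma exists_add_smul_mem_Icc_card_fractional_lt {z : ι → ℝ} (hz : z ∈ Set.Icc 0 1)
    {i j : ι} (hi : i ∈ fractional z) (hj : j ∈ fractional z) (hij : i ≠ j) {a b : ℝ}
    (ha : 0 < a) (hb : 0 < b) :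
    ∃ t : ℝ, 0 ≤ t ∧ z + t • (Pi.single i a - Pi.single j b : ι → ℝ) ∈ Set.Icc 0 1 ∧
      #(fractional (z + t • (Pi.single i a - Pi.single j b : ι → ℝ))) < #(fractional z) := by
  obtain ⟨hzi0, hzi1⟩ := mem_fractional.1 hi
  obtain ⟨hzj0, hzj1⟩ := mem_fractional.1 hj
  -- the largest step keeping `z i ≤ 1` and `0 ≤ z j`
  set t := min ((1 - z i) / a) (z j / b)
  have ht0 : 0 ≤ t := le_min (div_nonneg (by linarith) ha.le) (div_nonneg hzj0.le hb.le)
  have hta : t * a ≤ 1 - z i := (le_div_iff₀ ha).1 (min_le_left _ _)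
  have htb : t * b ≤ z j := (le_div_iff₀ hb).1 (min_le_right _ _)
  set z' := z + t • (Pi.single i a - Pi.single j b : ι → ℝ)
  have hz'i : z' i = z i + t * a := by simp [z', hij]
  have hz'j : z' j = z j - t * b := by simp [z', hij.symm]; ring
  have hz'k : ∀ k, k ≠ i → k ≠ j → z' k = z k := fun k hki hkj => by simp [z', hki, hkj]
  refine ⟨t, ht0, ⟨fun k => show (0 : ℝ) ≤ z' k from ?_, fun k => show z' k ≤ 1 from ?_⟩, ?_⟩
  · rcases eq_or_ne k i with rfl | hki
    · rw [hz'i]; positivity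
    rcases eq_or_ne k j with rfl | hkj
    · rw [hz'j]; linarith
    · rw [hz'k k hki hkj]; exact hz.1 k
  · rcases eq_or_ne k i with rfl | hki
    · rw [hz'i]; linarith
    rcases eq_or_ne k j with rfl | hkj
    · rw [hz'j]; nlinarith
    · rw [hz'k k hki hkj]; exact hz.2 k
  · have hfix : ∀ k ∉ fractional z, z' k = z k :=
      fun k hk => hz'k k (ne_of_mem_of_not_mem hi hk).symm (ne_of_mem_of_not_mem hj hk).symm
    rcases min_cases ((1 - z i) / a) (z j / b) with ⟨h, -⟩ | ⟨h, -⟩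
    · refine card_fractional_lt (z' := z') hfix hi ?_
      rw [mem_fractional, hz'i, show t = _ from h, div_mul_cancel₀ _ ha.ne']
      simp
    · refine card_fractional_lt (z' := z') hfix hj ?_
      rw [mem_fractional, hz'j, show t = _ from h, div_mul_cancel₀ _ hb.ne']
      simp

lemma exists_pipage_step (hW : ∀ k l, 0 ≤ W k l) {p z : ι → ℝ} (hz : z ∈ Set.Icc 0 1)
    {i j : ι} (hi : i ∈ fractional z) (hj : j ∈ fractional z) (hij : i ≠ j) (hpi : 0 < p i)
    (hpj : 0 < p j) :
    ∃ z' ∈ Set.Icc 0 1, multilinearQuadForm W z' ≤ multilinearQuadForm W z ∧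
      p ⬝ᵥ z' = p ⬝ᵥ z ∧ #(fractional z') < #(fractional z) := by
  have hpv : p ⬝ᵥ (Pi.single i (p j) - Pi.single j (p i) : ι → ℝ) = 0 := by
    rw [dotProduct_sub, dotProduct_single, dotProduct_single, mul_comm, sub_self]
  obtain ⟨s, hs, hzs, hcard_s⟩ :=
    exists_add_smul_mem_Icc_card_fractional_lt hz hi hj hij hpj hpi
  obtain ⟨t, ht, hzt, hcard_t⟩ :=
    exists_add_smul_mem_Icc_card_fractional_lt hz hj hi hij.symm hpi hpj
  rw [← neg_sub, smul_neg, ← sub_eq_add_neg] at hzt hcard_t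
  rcases multilinearQuadForm_add_smul_le_or_sub_smul_le hW
    (fun k l => single_sub_single_mul_nonpos hpj.le hpi.le) z hs ht with h | h
  · refine ⟨_, hzs, h, ?_, hcard_s⟩
    rw [dotProduct_add, dotProduct_smul, hpv, smul_zero, add_zero]
  · refine ⟨_, hzt, h, ?_, hcard_t⟩
    rw [dotProduct_sub, dotProduct_smul, hpv, smul_zero, sub_zero]

lemma dotProduct_update_zero (p z : ι → ℝ) (i : ι) :
    p ⬝ᵥ update z i 0 = p ⬝ᵥ z - p i * z i := by
  rw [← dotProduct_single, ← dotProduct_sub]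
  congr 1
  ext k
  rcases eq_or_ne k i with rfl | hk <;> simp [*]

lemma multilinearQuadForm_update_zero_le (hW : ∀ k l, 0 ≤ W k l) {z : ι → ℝ}
    (hz : z ∈ Set.Icc 0 1) (i : ι) :
    multilinearQuadForm W (update z i 0) ≤ multilinearQuadForm W z :=
  multilinearQuadForm_mono hW (update_zero_mem_Icc hz i).1 (update_le_self_iff.2 (hz.1 i))

lemma card_fractional_update_zero_lt {z : ι → ℝ} {i : ι} (hi : i ∈ fractional z) :
    #(fractional (update z i 0)) < #(fractional z) :=
  card_fractional_lt (fun k hk => update_of_ne (ne_of_mem_of_not_mem hi hk).symm 0 z) hi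
    (by simp [mem_fractional])

theorem exists_binary_multilinearQuadForm_le (hW : ∀ k l, 0 ≤ W k l) {p : ι → ℝ}
    (hp : 0 ≤ p) {M : ℝ} (hpM : ∀ k, p k ≤ M) (hM : 0 ≤ M) {z : ι → ℝ} (hz : z ∈ Set.Icc 0 1) :
    ∃ x : ι → ℝ, (∀ k, x k = 0 ∨ x k = 1) ∧
      multilinearQuadForm W x ≤ multilinearQuadForm W z ∧ p ⬝ᵥ z - M ≤ p ⬝ᵥ x := by
  induction hN : #(fractional z) using Nat.strong_induction_on generalizing z with
  | _ N ih =>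
  subst hN
  by_cases hzero : ∃ i ∈ fractional z, p i = 0
  · obtain ⟨i, hi, hpi⟩ := hzero
    obtain ⟨x, hx, hGx, hpx⟩ :=
      ih _ (card_fractional_update_zero_lt hi) (update_zero_mem_Icc hz i) rfl
    refine ⟨x, hx, hGx.trans (multilinearQuadForm_update_zero_le hW hz i), ?_⟩
    rwa [dotProduct_update_zero, hpi, zero_mul, sub_zero] at hpx
  push Not at hzero
  rcases (fractional z).eq_empty_or_nonempty with hempty | ⟨i, hi⟩
  · refine ⟨z, fun k => eq_zero_or_eq_one_of_notMem_fractional hz ?_, le_rfl, by linarith⟩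
    simp [hempty]
  rcases Finset.eq_singleton_or_nontrivial hi with hsingle | hnontriv
  · refine ⟨update z i 0, fun k => ?_, multilinearQuadForm_update_zero_le hW hz i, ?_⟩
    · rcases eq_or_ne k i with rfl | hk
      · simp
      · rw [update_of_ne hk]
        exact eq_zero_or_eq_one_of_notMem_fractional hz (by simp [hsingle, hk])
    · rw [dotProduct_update_zero]
      linarith [mul_le_of_le_one_right (hp i) (hz.2 i), hpM i]
  · obtain ⟨j, hj, hji⟩ := hnontriv.exists_ne i
    obtain ⟨z', hz', hGz', hpz', hcard⟩ := exists_pipage_step hW hz hi hj hji.symm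
      ((hp i).lt_of_ne' (hzero i hi)) ((hp j).lt_of_ne' (hzero j hj))
    obtain ⟨x, hx, hGx, hpx⟩ := ih _ hcard hz' rfl
    exact ⟨x, hx, hGx.trans hGz', hpz' ▸ hpx⟩

end

theorem stmt_3_general {n : ℕ} (hn : 0 < n) (W : Matrix (Fin n) (Fin n) ℝ)
    (hW : ∀ i j, 0 ≤ W i j)
    (p : Fin n → ℝ) (hp : ∀ i, 0 ≤ p i) (c : ℝ)
    (φ : ℝ) (hφ : φ = (Real.sqrt 5 - 1) / 2)
    (y : Fin n → ℝ) (hy : ∀ i, y i ∈ Set.Icc (0:ℝ) 1)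
    (h1 : quadForm W y ≤ c) (h2 : (∑ i, W i i * y i) ≤ c) :
    ∃ x : Fin n → ℝ, (∀ i, x i = 0 ∨ x i = 1) ∧ quadForm W x ≤ c ∧
      φ * (∑ i, p i * y i) -
          Finset.univ.sup' (Finset.univ_nonempty_iff.mpr (Fin.pos_iff_nonempty.mp hn)) p
        ≤ ∑ i, p i * x i := by
  have hφψ : φ = -Real.goldenConj := by rw [hφ, Real.goldenConj]; ring
  have hφ0 : 0 ≤ φ := by linarith [Real.goldenConj_neg]
  have hφ1 : φ ≤ 1 := by linarith [Real.neg_one_lt_goldenConj]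
  have hφsq : φ ^ 2 + φ = 1 := by rw [hφψ, neg_sq, Real.goldenConj_sq]; ring
  have hz : φ • y ∈ Set.Icc 0 1 :=
    ⟨fun i => mul_nonneg hφ0 (hy i).1, fun i => mul_le_one₀ hφ1 (hy i).1 (hy i).2⟩
  have hGz : multilinearQuadForm W (φ • y) ≤ c := calc
    multilinearQuadForm W (φ • y) ≤ φ ^ 2 * quadForm W y + φ * ∑ i, W i i * y i :=
        multilinearQuadForm_smul_le hW hφ0 fun i => (hy i).1
    _ ≤ φ ^ 2 * c + φ * c := by gcongr
    _ = c := by rw [← add_mul, hφsq, one_mul]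
  obtain ⟨x, hx, hGx, hpx⟩ := exists_binary_multilinearQuadForm_le hW hp
    (fun i => le_sup' p (mem_univ i)) ((hp ⟨0, hn⟩).trans (le_sup' p (mem_univ _))) hz
  refine ⟨x, hx, multilinearQuadForm_eq_quadForm hx ▸ hGx.trans hGz, ?_⟩
  rw [dotProduct_smul, smul_eq_mul] at hpx
  exact hpx

theorem stmt_3 {n : ℕ} (hn : 0 < n) (W : Matrix (Fin n) (Fin n) ℝ) (hsym : W.IsSymm)
    (hW : ∀ i j, 0 ≤ W i j) (hdiag : ∀ i, 0 < W i i)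
    (p : Fin n → ℝ) (hp : ∀ i, 0 ≤ p i) (c : ℝ) (hc : 0 ≤ c)
    (φ : ℝ) (hφ : φ = (Real.sqrt 5 - 1) / 2)
    (y : Fin n → ℝ) (hy : ∀ i, y i ∈ Set.Icc (0:ℝ) 1)
    (h1 : quadForm W y ≤ c) (h2 : (∑ i, W i i * y i) ≤ c) :
    ∃ x : Fin n → ℝ, (∀ i, x i = 0 ∨ x i = 1) ∧ quadForm W x ≤ c ∧
      φ * (∑ i, p i * y i) -
          Finset.univ.sup' (Finset.univ_nonempty_iff.mpr (Fin.pos_iff_nonempty.mp hn)) p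
        ≤ ∑ i, p i * x i :=
  stmt_3_general hn W hW p hp c φ hφ y hy h1 h2
end

section
/- Let m ∈ ℕ, m ≥ 1, and let (θ_t)_{t≥1} be the real sequence defined by θ₁ = 1/m and the recursion 1 − (m + 2√(t·m))·θ_{t+1} = ∑_{i=1}^t θ_i for t ≥ 1. Then ∑_{t=1}^m θ_t ≥ 1 − √3/e. -/
/-!
Write `R t = 1 - ∑_{i ≤ t} θ i` and `c t = m + 2√(tm)`. The recursion says `θ (t+1) = R t / c t`,
so `R (t+1) = (1 - 1/c t) R t`; since `c 0 = m`, the initial condition is the case `t = 0` of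
the same recursion, and `R m = ∏_{t<m} (1 - 1/c t) ≤ exp (-∑_{t<m} 1/c t)`. As `c` is increasing,
this sum dominates `∫₀^m ds / (m + 2√(sm)) = 1 - (log 3)/2`, so `R m ≤ exp ((log 3)/2 - 1) = √3/e`.
-/

open Finset Real

theorem one_sub_sum_Icc_eq_prod_range {θ c : ℕ → ℝ} (hc : ∀ t, c t ≠ 0)
    (hrec : ∀ t, 1 - c t * θ (t + 1) = ∑ i ∈ Icc 1 t, θ i) (n : ℕ) :
    1 - ∑ i ∈ Icc 1 n, θ i = ∏ i ∈ range n, (1 - 1 / c i) := by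
  induction n with
  | zero => simp
  | succ n ih =>
    have hθ : θ (n + 1) = (1 - ∑ i ∈ Icc 1 n, θ i) / c n := by
      rw [eq_div_iff (hc n)]
      linarith [hrec n]
    rw [sum_Icc_succ_top (Nat.le_add_left 1 n), prod_range_succ, ← ih, hθ]
    field_simp
    ring

theorem prod_one_sub_le_exp_neg_sum {ι : Type*} (s : Finset ι) {x : ι → ℝ}
    (hx : ∀ i ∈ s, x i ≤ 1) :
    ∏ i ∈ s, (1 - x i) ≤ exp (-∑ i ∈ s, x i) := by
  rw [← sum_neg_distrib, exp_sum]
  exact prod_le_prod (fun i hi => sub_nonneg.2 (hx i hi)) fun i _ => one_sub_le_exp_neg (x i)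

theorem sub_le_sum_range_of_hasDerivAt {F f : ℝ → ℝ} (hF : Continuous F)
    (hderiv : ∀ s > 0, HasDerivAt F (f s) s) (hf : AntitoneOn f (Set.Ici 0)) (n : ℕ) :
    F n - F 0 ≤ ∑ i ∈ range n, f i := by
  have htele := sum_range_sub (fun i : ℕ => F i) n
  simp only [Nat.cast_zero] at htele
  rw [← htele]
  refine sum_le_sum fun i _ => ?_
  have hi : (0 : ℝ) ≤ i := i.cast_nonneg
  obtain ⟨s, hs, hslope⟩ := exists_hasDerivAt_eq_slope F f (lt_add_one (i : ℝ)) hF.continuousOn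
    fun s hs => hderiv s (hi.trans_lt hs.1)
  rw [add_sub_cancel_left, div_one] at hslope
  push_cast
  rw [← hslope]
  exact hf hi (hi.trans hs.1.le) hs.1.le

noncomputable def sqrtLogPrimitive (M s : ℝ) : ℝ :=
  √(s * M) / M - log (1 + 2 * √(s * M) / M) / 2

theorem continuous_sqrtLogPrimitive {M : ℝ} (hM : 0 < M) : Continuous (sqrtLogPrimitive M) := by
  unfold sqrtLogPrimitive
  refine (by fun_prop : Continuous fun s => √(s * M) / M).sub
    (Continuous.div_const (Continuous.log (by fun_prop) fun s => ?_) 2)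
  positivity

theorem hasDerivAt_sqrtLogPrimitive {M s : ℝ} (hM : 0 < M) (hs : 0 < s) :
    HasDerivAt (sqrtLogPrimitive M) (1 / (M + 2 * √(s * M))) s := by
  have hsM : 0 < s * M := mul_pos hs hM
  have hw : HasDerivAt (fun s => √(s * M)) (M / (2 * √(s * M))) s := by
    simpa using ((hasDerivAt_mul_const M).sqrt hsM.ne')
  have hlog := ((((hw.const_mul 2).div_const M).const_add 1).log (by positivity)).div_const 2
  refine ((hw.div_const M).sub hlog).congr_deriv ?_
  have hw0 : 0 < √(s * M) := sqrt_pos.2 hsM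
  field_simp
  ring

theorem sqrtLogPrimitive_zero (M : ℝ) : sqrtLogPrimitive M 0 = 0 := by
  simp [sqrtLogPrimitive]

theorem sqrtLogPrimitive_self {M : ℝ} (hM : 0 < M) : sqrtLogPrimitive M M = 1 - log 3 / 2 := by
  rw [sqrtLogPrimitive, sqrt_mul_self hM.le, mul_div_assoc, div_self hM.ne']
  norm_num

theorem stmt_5 (m : ℕ) (hm : 1 ≤ m) (θ : ℕ → ℝ)
    (hθ1 : θ 1 = 1 / (m : ℝ))
    (hrec : ∀ t : ℕ, 1 ≤ t →
      1 - ((m : ℝ) + 2 * Real.sqrt ((t : ℝ) * (m : ℝ))) * θ (t + 1) =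
        ∑ i ∈ Finset.Icc 1 t, θ i) :
    1 - Real.sqrt 3 / Real.exp 1 ≤ ∑ t ∈ Finset.Icc 1 m, θ t := by
  set c : ℕ → ℝ := fun t => m + 2 * √(t * m)
  have hM : (0 : ℝ) < m := by exact_mod_cast hm
  have hc : ∀ t, (1 : ℝ) ≤ c t := fun t =>
    (Nat.one_le_cast.2 hm).trans (le_add_of_nonneg_right (by positivity))
  have hrec₀ : ∀ t, 1 - c t * θ (t + 1) = ∑ i ∈ Icc 1 t, θ i := by
    rintro (_ | t)
    · simp [c, hθ1, hM.ne']
    · exact hrec _ (Nat.le_add_left 1 t)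
  have hsum : 1 - log 3 / 2 ≤ ∑ i ∈ range m, 1 / c i := by
    have hanti : AntitoneOn (fun s : ℝ => 1 / (m + 2 * √(s * m))) (Set.Ici 0) :=
      fun s _ u _ hsu => one_div_le_one_div_of_le (by positivity) (by gcongr)
    simpa [sqrtLogPrimitive_self hM, sqrtLogPrimitive_zero, c] using
      sub_le_sum_range_of_hasDerivAt (continuous_sqrtLogPrimitive hM)
        (fun s hs => hasDerivAt_sqrtLogPrimitive hM hs) hanti m
  have hexp : exp (-(1 - log 3 / 2)) = √3 / exp 1 := by
    rw [show -(1 - log 3 / 2) = log √3 - 1 by rw [log_sqrt (by norm_num)]; ring,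
      exp_sub, exp_log (by positivity)]
  have hrem : 1 - ∑ t ∈ Icc 1 m, θ t ≤ √3 / exp 1 := by
    rw [one_sub_sum_Icc_eq_prod_range (fun t => (one_pos.trans_le (hc t)).ne') hrec₀, ← hexp]
    exact (prod_one_sub_le_exp_neg_sum _ fun i _ => div_le_one_of_le₀ (hc i) (by positivity)).trans
      (exp_le_exp.2 (neg_le_neg hsum))
  linarith
end

section
/- Let m ∈ ℕ, m ≥ 1, let w₀, w₁, …, w_m be natural numbers with 0 = w₀ < w₁ < ⋯ < w_m, and let θ₁, …, θ_m ≥ 0 be reals. Then ∑_{i=1}^m θ_i·(w_i − w_{i−1}) ≥ (1 − √3/e) · min_{t=0,…,m−1} [ ∑_{i=1}^t θ_i·(w_i − w_{i−1}) + θ_{t+1}·(w_m + 2√(w_t·w_m)) ]. -/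
/-!
Let `S t` be the partial sums, `A` the minimum and `u t = w t / w m`. The potential
`Φ u = √u - log (1 + 2 √u) / 2` has derivative `(1 + 2 √u)⁻¹`, hence is concave on `[0, ∞)`.
The bound `A ≤ S t + θ (t + 1) * w m * (1 + 2 √(u t))` makes the step to `S (t + 1)` pay at least
the fraction `1 - (u (t + 1) - u t) / (1 + 2 √(u t)) ≤ exp (-(Φ (u (t + 1)) - Φ (u t)))` of the gap
`A - S t`, so `A - S m ≤ A * exp (-Φ 1) = A * √3 / e`.
-/

open Real Set

noncomputable def potential (u : ℝ) : ℝ := √u - log (1 + 2 * √u) / 2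

lemma potential_zero : potential 0 = 0 := by simp [potential]

lemma exp_neg_potential_one : exp (-potential 1) = √3 / exp 1 := by
  have h : -potential 1 = log √3 - 1 := by
    rw [potential, sqrt_one, log_sqrt (by norm_num)]
    norm_num
  rw [h, exp_sub, exp_log (by positivity)]

lemma continuous_potential : Continuous potential := by
  unfold potential
  fun_prop (disch := intro u; positivity)

lemma hasDerivAt_potential {u : ℝ} (hu : 0 < u) :
    HasDerivAt potential (1 + 2 * √u)⁻¹ u := by
  have hs : 0 < √u := sqrt_pos.mpr hu
  have hsqrt := hasDerivAt_sqrt hu.ne'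
  have hlog := ((hsqrt.const_mul 2).const_add 1).log (by positivity)
  refine (hsqrt.sub (hlog.div_const 2)).congr_deriv ?_
  field_simp
  ring

lemma potential_sub_le {a b : ℝ} (ha : 0 ≤ a) (hab : a ≤ b) :
    potential b - potential a ≤ (1 + 2 * √a)⁻¹ * (b - a) := by
  refine (convex_Ici a).image_sub_le_mul_sub_of_deriv_le continuous_potential.continuousOn
    (fun x hx => ?_) (fun x hx => ?_) a self_mem_Ici b hab hab
  · rw [interior_Ici] at hx
    exact (hasDerivAt_potential (ha.trans_lt hx)).differentiableAt.differentiableWithinAt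
  · rw [interior_Ici] at hx
    rw [(hasDerivAt_potential (ha.trans_lt hx)).deriv]
    gcongr
    exact hx.le

lemma sub_mul_le_mul_exp_neg_potential_sub {a b d x : ℝ} (ha : 0 ≤ a) (hab : a ≤ b)
    (hd : 0 ≤ d) (hx : d ≤ x * (1 + 2 * √a)) :
    d - x * (b - a) ≤ d * exp (-(potential b - potential a)) := by
  have hP : 0 < 1 + 2 * √a := by positivity
  have hdx : d * (1 + 2 * √a)⁻¹ ≤ x := by rwa [← div_eq_mul_inv, div_le_iff₀ hP]
  calc d - x * (b - a) ≤ d * (1 - (1 + 2 * √a)⁻¹ * (b - a)) := by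
        nlinarith [mul_le_mul_of_nonneg_right hdx (sub_nonneg.mpr hab)]
    _ ≤ d * exp (-((1 + 2 * √a)⁻¹ * (b - a))) := by
        gcongr
        linarith [add_one_le_exp (-((1 + 2 * √a)⁻¹ * (b - a)))]
    _ ≤ d * exp (-(potential b - potential a)) := by
        gcongr
        exact potential_sub_le ha hab

lemma sub_le_mul_exp_neg_potential {A : ℝ} (hA : 0 ≤ A) {u x S : ℕ → ℝ} {n : ℕ}
    (hu_nonneg : ∀ t, 0 ≤ u t) (hu0 : u 0 = 0) (hu : ∀ t < n, u t ≤ u (t + 1))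
    (hx : ∀ t < n, 0 ≤ x t) (hS0 : S 0 = 0)
    (hS : ∀ t < n, S (t + 1) = S t + x t * (u (t + 1) - u t))
    (hA_le : ∀ t < n, A ≤ S t + x t * (1 + 2 * √(u t))) :
    A - S n ≤ A * exp (-potential (u n)) := by
  induction n with
  | zero => simp [hu0, hS0, potential_zero]
  | succ n ih =>
    have ih := ih (fun t ht => hu t (by omega)) (fun t ht => hx t (by omega))
      (fun t ht => hS t (by omega)) (fun t ht => hA_le t (by omega))
    rw [hS n n.lt_succ_self, ← sub_sub]
    rcases le_or_gt (A - S n) 0 with hgap | hgap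
    · nlinarith [mul_nonneg (hx n n.lt_succ_self) (sub_nonneg.mpr (hu n n.lt_succ_self)),
        exp_pos (-potential (u (n + 1)))]
    · calc A - S n - x n * (u (n + 1) - u n)
          ≤ (A - S n) * exp (-(potential (u (n + 1)) - potential (u n))) :=
            sub_mul_le_mul_exp_neg_potential_sub (hu_nonneg n) (hu n n.lt_succ_self) hgap.le
              (by linarith [hA_le n n.lt_succ_self])
        _ ≤ A * exp (-potential (u n)) * exp (-(potential (u (n + 1)) - potential (u n))) := by
            gcongr
        _ = A * exp (-potential (u (n + 1))) := by
            rw [mul_assoc, ← exp_add]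
            ring_nf

lemma add_two_mul_sqrt_mul_eq {W : ℝ} (hW : 0 < W) (v : ℝ) :
    W + 2 * √(v * W) = W * (1 + 2 * √(v / W)) := by
  rw [sqrt_div' v hW.le, sqrt_mul' v hW.le]
  field_simp
  linear_combination (2 * √v) * mul_self_sqrt hW.le

lemma sum_Icc_mul_sub_pred_nonneg {m t : ℕ} (ht : t ≤ m) {w θ : ℕ → ℝ}
    (hw : ∀ i < m, w i ≤ w (i + 1)) (hθ : ∀ i, 1 ≤ i → i ≤ m → 0 ≤ θ i) :
    0 ≤ ∑ i ∈ Finset.Icc 1 t, θ i * (w i - w (i - 1)) :=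
  Finset.sum_nonneg fun i hi => by
    obtain ⟨hi1, hit⟩ := Finset.mem_Icc.mp hi
    have := hw (i - 1) (by omega)
    rw [Nat.sub_add_cancel hi1] at this
    exact mul_nonneg (hθ i hi1 (by omega)) (sub_nonneg.mpr this)

theorem stmt_7 (m : ℕ) (hm : 1 ≤ m) (w : ℕ → ℕ) (hw0 : w 0 = 0)
    (hmono : ∀ i < m, w i < w (i + 1))
    (θ : ℕ → ℝ) (hθ : ∀ i, 1 ≤ i → i ≤ m → 0 ≤ θ i) :
    (1 - Real.sqrt 3 / Real.exp 1) *
        (Finset.range m).inf' ⟨0, Finset.mem_range.mpr hm⟩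
          (fun t => (∑ i ∈ Finset.Icc 1 t, θ i * ((w i : ℝ) - (w (i - 1) : ℝ))) +
            θ (t + 1) * ((w m : ℝ) + 2 * Real.sqrt ((w t : ℝ) * (w m : ℝ))))
      ≤ ∑ i ∈ Finset.Icc 1 m, θ i * ((w i : ℝ) - (w (i - 1) : ℝ)) := by
  set S : ℕ → ℝ := fun t => ∑ i ∈ Finset.Icc 1 t, θ i * ((w i : ℝ) - (w (i - 1) : ℝ))
  set W : ℝ := (w m : ℝ)
  have hw : ∀ t < m, (w t : ℝ) ≤ w (t + 1) := fun t ht => by exact_mod_cast (hmono t ht).le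
  have hW : 0 < W := Nat.cast_pos.mpr <| by
    simpa [Nat.sub_add_cancel hm] using (hmono (m - 1) (by omega)).trans_le' (Nat.zero_le _)
  have hS : ∀ t, S (t + 1) = S t + θ (t + 1) * (w (t + 1) - w t) := fun t => by
    simp only [S]
    rw [Finset.sum_Icc_succ_top (by omega), Nat.add_sub_cancel]
  set A := (Finset.range m).inf' ⟨0, Finset.mem_range.mpr hm⟩
    fun t => S t + θ (t + 1) * (W + 2 * √((w t : ℝ) * W))
  have hA : 0 ≤ A := Finset.le_inf' _ _ fun t ht => by
    have ht := Finset.mem_range.mp ht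
    have := hθ (t + 1) (by omega) (by omega)
    have := sum_Icc_mul_sub_pred_nonneg ht.le hw hθ
    positivity
  have key := sub_le_mul_exp_neg_potential hA (n := m) (u := fun t => w t / W)
    (x := fun t => θ (t + 1) * W) (S := S) (fun t => by positivity) (by simp [hw0])
    (fun t ht => div_le_div_of_nonneg_right (hw t ht) hW.le)
    (fun t ht => mul_nonneg (hθ (t + 1) (by omega) (by omega)) hW.le)
    (by simp [S]) (fun t _ => by rw [hS]; field_simp)
    (fun t ht => by
      rw [mul_assoc, ← add_two_mul_sqrt_mul_eq hW]
      exact Finset.inf'_le _ (Finset.mem_range.mpr ht))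
  rw [div_self hW.ne', exp_neg_potential_one] at key
  linarith
end
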